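/- arXiv:2001.03657 — 8 statements merged into one kernel-verified Lean document; each statement's English description precedes it below -/
import Mathlib

section
/- Let M be a positive natural number and let p, q, p' ∈ ℝ^M be such that p' weakly dominates q. Define p'' ∈ ℝ^M by p''_m = max(min(p'_m, p_m), min(p_m, q_m)). Then: (i) p'' weakly dominates q; (ii) min(p_m, q_m) ≤ p''_m ≤ p_m for every coordinate m; and (iii) Σ_m |p_m − p''_m| ≤ Σ_m |p_m − p'_m|. -/
/-- A point `p ∈ ℝ^M` weakly dominates `q ∈ ℝ^M` if `p m ≤ q m` for every coordinate `m`. -/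
def WeaklyDominates {M : ℕ} (p q : Fin M → ℝ) : Prop := ∀ m, p m ≤ q m

lemma clip_abs (a b c : ℝ) (h : c ≤ b) :
    |a - max (min c a) (min a b)| ≤ |a - c| := by
  rcases le_total c a with h1 | h1 <;> rcases le_total a b with h2 | h2 <;>
    simp [min_def, max_def, abs_sub_le_iff, abs_le] at * <;>
    constructor <;> split_ifs <;> linarith [abs_nonneg (a - c), le_abs_self (a - c)]

/-- Clipping a feasible moved point `p'` into the box `[min(p,q), p]` preserves weak
dominance of `q` and does not increase the ℓ¹ moving cost from `p`. -/
theorem clip_preserves_feasibility {M : ℕ} (hM : 0 < M) (p q p' : Fin M → ℝ)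
    (hdom : WeaklyDominates p' q) :
    WeaklyDominates (fun m => max (min (p' m) (p m)) (min (p m) (q m))) q ∧
    (∀ m, min (p m) (q m) ≤ max (min (p' m) (p m)) (min (p m) (q m)) ∧
          max (min (p' m) (p m)) (min (p m) (q m)) ≤ p m) ∧
    (∑ m, |p m - max (min (p' m) (p m)) (min (p m) (q m))|) ≤ ∑ m, |p m - p' m| := by
  refine ⟨fun m => ?_, fun m => ⟨le_max_right _ _, ?_⟩, ?_⟩
  · have := hdom m
    simp only [max_le_iff]
    exact ⟨le_trans (min_le_left _ _) this, min_le_right _ _⟩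
  · exact max_le (min_le_right _ _) (min_le_left _ _)
  · exact Finset.sum_le_sum fun m _ => clip_abs (p m) (q m) (p' m) (hdom m)
end

section
/- Let M be a positive natural number, let P = (p_1, …, p_{NP}) be a finite nonempty family of points in ℝ^M and Q a finite nonempty set of points in ℝ^M. Then the infimum defining DoM(P,Q) — the infimum over all families P' = (p'_1, …, p'_{NP}) of points in ℝ^M such that every q ∈ Q is weakly dominated by some p'_i, of Σ_i Σ_m |p_{i,m} − p'_{i,m}| — is attained; moreover there is a minimizing family P' satisfying min(p_{i,m}, min_{q ∈ Q} q_m) ≤ p'_{i,m} ≤ p_{i,m} for all i and m. -/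
/-- The dominance move `DoM(P,Q)`: the infimum, over families `P'` of points of `ℝ^M`
(indexed like `P`) such that every `q ∈ Q` is weakly dominated by some `P' i`, of the total
ℓ¹ moving distance `∑ i, ∑ m, |P i m − P' i m|`. -/
noncomputable def DoM {M NP : ℕ} (P : Fin NP → Fin M → ℝ) (Q : Finset (Fin M → ℝ)) : ℝ :=
  sInf { c : ℝ | ∃ P' : Fin NP → Fin M → ℝ,
    (∀ q ∈ Q, ∃ i, WeaklyDominates (P' i) q) ∧
    c = ∑ i, ∑ m, |P i m - P' i m| }

lemma clamp_abs (a l x : ℝ) (hla : l ≤ a) : |a - min a (max x l)| ≤ |a - x| := by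
  have h1 : min a (max x l) ≤ a := min_le_left _ _
  rw [abs_of_nonneg (by linarith)]
  rcases le_total x l with h | h
  · rw [max_eq_right h, min_eq_right hla, abs_of_nonneg (by linarith)]
    linarith
  · rw [max_eq_left h]
    rcases le_total a x with h2 | h2
    · rw [min_eq_left h2]
      simp [abs_nonneg]
    · rw [min_eq_right h2, abs_of_nonneg (by linarith)]

/-- The infimum defining `DoM(P,Q)` is attained, and moreover by a minimizing family `P'`
satisfying `min (P i m) (min_{q ∈ Q} q m) ≤ P' i m ≤ P i m` for all `i` and `m`. -/
theorem dom_attained {M NP : ℕ} (hM : 0 < M) (hNP : 0 < NP)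
    (P : Fin NP → Fin M → ℝ) (Q : Finset (Fin M → ℝ)) (hQ : Q.Nonempty) :
    ∃ P' : Fin NP → Fin M → ℝ,
      (∀ q ∈ Q, ∃ i, WeaklyDominates (P' i) q) ∧
      (∑ i, ∑ m, |P i m - P' i m|) = DoM P Q ∧
      ∀ i m, min (P i m) (Q.inf' hQ (fun q => q m)) ≤ P' i m ∧ P' i m ≤ P i m := by
  classical
  set L : Fin NP → Fin M → ℝ := fun i m => min (P i m) (Q.inf' hQ (fun q => q m)) with hL
  have hLP : L ≤ P := fun i => fun m => min_le_left _ _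
  have hLq : ∀ (i : Fin NP) (m : Fin M), ∀ q ∈ Q, L i m ≤ q m := by
    intro i m q hq
    exact le_trans (min_le_right _ _) (Finset.inf'_le _ hq)
  set F : Set (Fin NP → Fin M → ℝ) :=
    {P' | ∀ q ∈ Q, ∃ i, WeaklyDominates (P' i) q} with hF
  have hFclosed : IsClosed F := by
    have : F = ⋂ q ∈ Q, ⋃ i, ⋂ m, {P' : Fin NP → Fin M → ℝ | P' i m ≤ q m} := by
      ext P'
      simp [hF, WeaklyDominates, Set.mem_iInter, Set.mem_iUnion]
    rw [this]
    refine isClosed_biInter fun q _ => isClosed_iUnion_of_finite fun i =>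
      isClosed_iInter fun m => isClosed_le ?_ continuous_const
    exact (continuous_apply m).comp (continuous_apply i)
  set K : Set (Fin NP → Fin M → ℝ) := Set.Icc L P ∩ F with hK
  have hKcompact : IsCompact K := (isCompact_Icc).inter_right hFclosed
  have hLmem : L ∈ K := by
    refine ⟨⟨le_refl _, hLP⟩, fun q hq => ⟨⟨0, hNP⟩, fun m => hLq _ m q hq⟩⟩
  set f : (Fin NP → Fin M → ℝ) → ℝ := fun P' => ∑ i, ∑ m, |P i m - P' i m| with hf
  have hfc : Continuous f := by
    apply continuous_finset_sum
    intro i _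
    apply continuous_finset_sum
    intro m _
    have h : Continuous fun P' : Fin NP → Fin M → ℝ => P' i m :=
      (continuous_apply m).comp (continuous_apply i)
    exact (continuous_const.sub h).abs
  obtain ⟨P₀, hP₀K, hP₀min⟩ := IsCompact.exists_isMinOn (α := ℝ) hKcompact ⟨L, hLmem⟩ hfc.continuousOn
  -- clamping lemma: any feasible P' can be moved into K without increasing cost
  have hclamp : ∀ P' : Fin NP → Fin M → ℝ, (∀ q ∈ Q, ∃ i, WeaklyDominates (P' i) q) →
      f P₀ ≤ f P' := by
    intro P' hP'
    set P'' : Fin NP → Fin M → ℝ := fun i m => min (P i m) (max (P' i m) (L i m)) with hP''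
    have hmem : P'' ∈ K := by
      constructor
      · constructor
        · intro i
          intro m
          exact le_min (hLP i m) (le_max_right _ _)
        · intro i
          intro m
          exact min_le_left _ _
      · intro q hq
        obtain ⟨i, hi⟩ := hP' q hq
        exact ⟨i, fun m => le_trans (min_le_right _ _) (max_le (hi m) (hLq i m q hq))⟩
    calc f P₀ ≤ f P'' := hP₀min hmem
      _ ≤ f P' := by
          refine Finset.sum_le_sum fun i _ => Finset.sum_le_sum fun m _ => ?_
          exact clamp_abs (P i m) (L i m) (P' i m) (hLP i m)
  refine ⟨P₀, hP₀K.2, ?_, fun i m => ⟨hP₀K.1.1 i m, hP₀K.1.2 i m⟩⟩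
  have hset : f P₀ ∈ { c : ℝ | ∃ P' : Fin NP → Fin M → ℝ,
      (∀ q ∈ Q, ∃ i, WeaklyDominates (P' i) q) ∧
      c = ∑ i, ∑ m, |P i m - P' i m| } := ⟨P₀, hP₀K.2, rfl⟩
  have hlb : ∀ c ∈ { c : ℝ | ∃ P' : Fin NP → Fin M → ℝ,
      (∀ q ∈ Q, ∃ i, WeaklyDominates (P' i) q) ∧
      c = ∑ i, ∑ m, |P i m - P' i m| }, f P₀ ≤ c := by
    rintro c ⟨P', hP', rfl⟩
    exact hclamp P' hP'
  have h1 : DoM P Q ≤ f P₀ := csInf_le ⟨f P₀, hlb⟩ hset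
  have h2 : f P₀ ≤ DoM P Q := le_csInf ⟨f P₀, hset⟩ hlb
  exact le_antisymm h2 h1
end

section
/- Let M be a positive natural number, let P = (p_1, …, p_{NP}) be a finite nonempty family of points in ℝ^M and Q a finite nonempty set of points in ℝ^M. Then DoM(P,Q) equals the minimum, over all functions φ : Q → {1, …, NP}, of Σ_{i=1}^{NP} Σ_{m=1}^{M} max(0, p_{i,m} − min_{q ∈ φ⁻¹(i)} q_m), where a summand with φ⁻¹(i) empty contributes 0. -/
/-- Assignment cost. -/
noncomputable def acost {M NP : ℕ} (P : Fin NP → Fin M → ℝ) (Q : Finset (Fin M → ℝ))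
    (φ : (Fin M → ℝ) → Fin NP) : ℝ :=
  ∑ i, (if h : (Q.filter (fun q => φ q = i)).Nonempty
    then ∑ m, max 0 (P i m - (Q.filter (fun q => φ q = i)).inf' h (fun q => q m))
    else 0)

theorem acost_mem {M NP : ℕ} (P : Fin NP → Fin M → ℝ) (Q : Finset (Fin M → ℝ))
    (φ : (Fin M → ℝ) → Fin NP) :
    ∃ P' : Fin NP → Fin M → ℝ,
      (∀ q ∈ Q, ∃ i, WeaklyDominates (P' i) q) ∧
      acost P Q φ = ∑ i, ∑ m, |P i m - P' i m| := by
  classical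
  set P' : Fin NP → Fin M → ℝ := fun i m =>
    if h : (Q.filter (fun q => φ q = i)).Nonempty
    then min (P i m) ((Q.filter (fun q => φ q = i)).inf' h (fun q => q m))
    else P i m with hP'
  refine ⟨P', ?_, ?_⟩
  · intro q hq
    refine ⟨φ q, fun m => ?_⟩
    have hqf : q ∈ Q.filter (fun q' => φ q' = φ q) := by simp [hq]
    have hne : (Q.filter (fun q' => φ q' = φ q)).Nonempty := ⟨q, hqf⟩
    simp only [hP', dif_pos hne]
    exact le_trans (min_le_right _ _) (Finset.inf'_le _ hqf)
  · unfold acost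
    refine Finset.sum_congr rfl fun i _ => ?_
    by_cases h : (Q.filter (fun q => φ q = i)).Nonempty
    · rw [dif_pos h]
      refine Finset.sum_congr rfl fun m _ => ?_
      simp only [hP', dif_pos h]
      set a := (Q.filter (fun q => φ q = i)).inf' h (fun q => q m) with ha
      rcases le_total a (P i m) with hle | hle
      · rw [min_eq_right hle, max_eq_right (by linarith), abs_of_nonneg (by linarith)]
      · rw [min_eq_left hle, max_eq_left (by linarith), sub_self, abs_zero]
    · rw [dif_neg h]
      simp only [hP', dif_neg h, sub_self, abs_zero, Finset.sum_const_zero]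

theorem exists_acost_le {M NP : ℕ} (hNP : 0 < NP) (P : Fin NP → Fin M → ℝ)
    (Q : Finset (Fin M → ℝ)) (P' : Fin NP → Fin M → ℝ)
    (hcov : ∀ q ∈ Q, ∃ i, WeaklyDominates (P' i) q) :
    ∃ φ : (Fin M → ℝ) → Fin NP, acost P Q φ ≤ ∑ i, ∑ m, |P i m - P' i m| := by
  classical
  set φ : (Fin M → ℝ) → Fin NP := fun q =>
    if h : ∃ i, WeaklyDominates (P' i) q then h.choose else ⟨0, hNP⟩ with hφ
  refine ⟨φ, Finset.sum_le_sum fun i _ => ?_⟩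
  by_cases h : (Q.filter (fun q => φ q = i)).Nonempty
  · rw [dif_pos h]
    refine Finset.sum_le_sum fun m _ => ?_
    have hdom : P' i m ≤ (Q.filter (fun q => φ q = i)).inf' h (fun q => q m) := by
      apply Finset.le_inf'
      intro q hq
      rw [Finset.mem_filter] at hq
      obtain ⟨hqQ, hqi⟩ := hq
      have hex : ∃ j, WeaklyDominates (P' j) q := hcov q hqQ
      have hw : WeaklyDominates (P' (φ q)) q := by
        simp only [hφ, dif_pos hex]; exact hex.choose_spec
      rw [hqi] at hw
      exact hw m
    calc max 0 (P i m - (Q.filter (fun q => φ q = i)).inf' h (fun q => q m))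
        ≤ max 0 (P i m - P' i m) := max_le_max le_rfl (by linarith)
      _ ≤ |P i m - P' i m| := max_le (abs_nonneg _) (le_abs_self _)
  · rw [dif_neg h]
    exact Finset.sum_nonneg fun m _ => abs_nonneg _

/-- Extension of an assignment on `Q` to all of `ℝ^M`. -/
noncomputable def extψ {M NP : ℕ} (hNP : 0 < NP) (Q : Finset (Fin M → ℝ))
    (ψ : ↥Q → Fin NP) : (Fin M → ℝ) → Fin NP :=
  fun q => if h : q ∈ Q then ψ ⟨q, h⟩ else ⟨0, hNP⟩

theorem acost_ext_restrict {M NP : ℕ} (hNP : 0 < NP) (P : Fin NP → Fin M → ℝ)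
    (Q : Finset (Fin M → ℝ)) (φ : (Fin M → ℝ) → Fin NP) :
    acost P Q φ = acost P Q (extψ hNP Q (fun q => φ q.1)) := by
  classical
  unfold acost
  refine Finset.sum_congr rfl fun i _ => ?_
  have hfe : Q.filter (fun q => φ q = i)
      = Q.filter (fun q => extψ hNP Q (fun q => φ q.1) q = i) := by
    apply Finset.filter_congr
    intro q hq
    simp [extψ, hq]
  rw [hfe]

/-- `DoM(P,Q)` equals the minimum, over all assignments `φ` of the points of `Q` to indices
of `P`, of `∑ i, ∑ m, max 0 (P i m − min_{q ∈ φ⁻¹(i)} q m)`, where a summand with `φ⁻¹(i)`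
empty contributes `0`. -/
theorem dom_eq_min_assignment {M NP : ℕ} (hM : 0 < M) (hNP : 0 < NP)
    (P : Fin NP → Fin M → ℝ) (Q : Finset (Fin M → ℝ)) (hQ : Q.Nonempty) :
    IsLeast { c : ℝ | ∃ φ : (Fin M → ℝ) → Fin NP,
        c = ∑ i, (if h : (Q.filter (fun q => φ q = i)).Nonempty
          then ∑ m, max 0 (P i m - (Q.filter (fun q => φ q = i)).inf' h (fun q => q m))
          else 0) }
      (DoM P Q) := by
  classical
  show IsLeast { c : ℝ | ∃ φ : (Fin M → ℝ) → Fin NP, c = acost P Q φ } (DoM P Q)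
  set B : Finset ℝ :=
    Finset.univ.image (fun ψ : (↥Q → Fin NP) => acost P Q (extψ hNP Q ψ)) with hB
  have hBne : B.Nonempty :=
    ⟨_, Finset.mem_image_of_mem _ (Finset.mem_univ (fun _ => ⟨0, hNP⟩))⟩
  set c0 := B.min' hBne with hc0
  obtain ⟨ψ0, -, hψ0⟩ := Finset.mem_image.mp (B.min'_mem hBne)
  have hlbT : ∀ φ : (Fin M → ℝ) → Fin NP, c0 ≤ acost P Q φ := by
    intro φ
    rw [acost_ext_restrict hNP P Q φ]
    exact B.min'_le _ (Finset.mem_image_of_mem _ (Finset.mem_univ _))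
  have memS : c0 ∈ { c : ℝ | ∃ P' : Fin NP → Fin M → ℝ,
      (∀ q ∈ Q, ∃ i, WeaklyDominates (P' i) q) ∧
      c = ∑ i, ∑ m, |P i m - P' i m| } := by
    obtain ⟨P', hcov, hcost⟩ := acost_mem P Q (extψ hNP Q ψ0)
    exact ⟨P', hcov, by rw [hc0, ← hψ0]; exact hcost⟩
  have hlbS : ∀ c ∈ { c : ℝ | ∃ P' : Fin NP → Fin M → ℝ,
      (∀ q ∈ Q, ∃ i, WeaklyDominates (P' i) q) ∧
      c = ∑ i, ∑ m, |P i m - P' i m| }, c0 ≤ c := by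
    rintro c ⟨P', hcov, rfl⟩
    obtain ⟨φ, hφ⟩ := exists_acost_le hNP P Q P' hcov
    exact le_trans (hlbT φ) hφ
  have hDoM : DoM P Q = c0 := by
    unfold DoM
    exact le_antisymm (csInf_le ⟨c0, hlbS⟩ memS) (le_csInf ⟨c0, memS⟩ hlbS)
  rw [hDoM]
  constructor
  · exact ⟨extψ hNP Q ψ0, by rw [hc0, ← hψ0]⟩
  · rintro c ⟨φ, rfl⟩
    exact hlbT φ
end

section
/- Let M be a positive natural number, let P = (p_1, …, p_{NP}) be a finite nonempty family of points in ℝ^M and Q a finite nonempty set of points in ℝ^M. Then DoM(P,Q) = 0 if and only if every q ∈ Q is weakly dominated by some p_i (i.e., P weakly dominates Q). -/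
/-- `DoM(P,Q) = 0` iff every `q ∈ Q` is weakly dominated by some `P i`
(i.e., `P` weakly dominates `Q`). -/
theorem dom_eq_zero_iff {M NP : ℕ} (hM : 0 < M) (hNP : 0 < NP)
    (P : Fin NP → Fin M → ℝ) (Q : Finset (Fin M → ℝ)) (hQ : Q.Nonempty) :
    DoM P Q = 0 ↔ ∀ q ∈ Q, ∃ i, WeaklyDominates (P i) q := by
  haveI : Nonempty (Fin NP) := ⟨⟨0, hNP⟩⟩
  set S := { c : ℝ | ∃ P' : Fin NP → Fin M → ℝ,
    (∀ q ∈ Q, ∃ i, WeaklyDominates (P' i) q) ∧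
    c = ∑ i, ∑ m, |P i m - P' i m| } with hS
  have hSne : S.Nonempty := by
    refine ⟨_, fun i m => Q.inf' hQ (fun q => q m), fun q hq => ⟨⟨0, hNP⟩, fun m => ?_⟩, rfl⟩
    exact Finset.inf'_le _ hq
  have hbd : ∀ c ∈ S, (0:ℝ) ≤ c := by
    rintro c ⟨P', -, rfl⟩
    exact Finset.sum_nonneg fun i _ => Finset.sum_nonneg fun m _ => abs_nonneg _
  constructor
  · intro h q hq
    by_contra hcon
    push_neg at hcon
    have hw : ∀ i, ∃ m, q m < P i m := by
      intro i
      rcases not_forall.mp (hcon i) with ⟨m, hm⟩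
      exact ⟨m, lt_of_not_ge hm⟩
    choose f hf using hw
    set ε := Finset.univ.inf' Finset.univ_nonempty (fun i => P i (f i) - q (f i)) with hε
    have hεpos : 0 < ε := by
      apply Finset.lt_inf'_iff Finset.univ_nonempty |>.mpr
      intro i _
      exact sub_pos.mpr (hf i)
    have hle : ε ≤ DoM P Q := by
      apply le_csInf hSne
      rintro c ⟨P', hdom, rfl⟩
      obtain ⟨j, hj⟩ := hdom q hq
      have h1 : ε ≤ P j (f j) - q (f j) := Finset.inf'_le _ (Finset.mem_univ j)
      have h2 : P j (f j) - q (f j) ≤ |P j (f j) - P' j (f j)| := by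
        have := hj (f j)
        have : P j (f j) - q (f j) ≤ P j (f j) - P' j (f j) := by linarith
        exact this.trans (le_abs_self _)
      have h3 : |P j (f j) - P' j (f j)| ≤ ∑ m, |P j m - P' j m| :=
        Finset.single_le_sum (f := fun m => |P j m - P' j m|) (fun m _ => abs_nonneg _) (Finset.mem_univ (f j))
      have h4 : ∑ m, |P j m - P' j m| ≤ ∑ i, ∑ m, |P i m - P' i m| :=
        Finset.single_le_sum (f := fun i => ∑ m, |P i m - P' i m|)
          (fun i _ => Finset.sum_nonneg fun m _ => abs_nonneg _) (Finset.mem_univ j)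
      linarith
    rw [DoM] at h
    rw [← hS] at h
    unfold DoM at hle
    rw [← hS, h] at hle
    linarith
  · intro h
    have h0 : (0:ℝ) ∈ S := ⟨P, h, by simp⟩
    have : DoM P Q ≤ 0 := csInf_le ⟨0, hbd⟩ h0
    have : 0 ≤ DoM P Q := le_csInf hSne hbd
    unfold DoM at *
    rw [← hS] at *
    linarith
end

section
/- Let M be a positive natural number, let P = (p_1, …, p_{NP}) be a finite nonempty family of points in ℝ^M and Q a finite set of points in ℝ^M with at least two elements. If q₀ ∈ Q is weakly dominated by some q ∈ Q with q ≠ q₀, then DoM(P, Q) = DoM(P, Q \ {q₀}). -/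
/-- Step 1 correctness (dominated within `Q`): if `q₀ ∈ Q` is weakly dominated by some other
point `q ∈ Q`, then removing `q₀` from `Q` does not change the dominance move. -/
theorem dom_erase_dominated_in_Q {M NP : ℕ} (hM : 0 < M) (hNP : 0 < NP)
    (P : Fin NP → Fin M → ℝ) (Q : Finset (Fin M → ℝ)) (hQ : 2 ≤ Q.card)
    (q₀ : Fin M → ℝ) (hq₀ : q₀ ∈ Q)
    (hdom : ∃ q ∈ Q, q ≠ q₀ ∧ WeaklyDominates q q₀) :
    DoM P Q = DoM P (Q.erase q₀) := by
  obtain ⟨q, hqQ, hne, hdq⟩ := hdom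
  unfold DoM
  congr 1
  ext c
  constructor
  · rintro ⟨P', hcov, rfl⟩
    exact ⟨P', fun r hr => hcov r (Finset.mem_of_mem_erase hr), rfl⟩
  · rintro ⟨P', hcov, rfl⟩
    refine ⟨P', fun r hr => ?_, rfl⟩
    by_cases h : r = q₀
    · obtain ⟨i, hi⟩ := hcov q (Finset.mem_erase.mpr ⟨hne, hqQ⟩)
      exact ⟨i, fun m => h ▸ le_trans (hi m) (hdq m)⟩
    · exact hcov r (Finset.mem_erase.mpr ⟨h, hr⟩)
end

section
/- Let M be a positive natural number, let P = (p_1, …, p_{NP}) be a finite nonempty family of points in ℝ^M and Q a finite set of points in ℝ^M with at least two elements. If q₀ ∈ Q is weakly dominated by some p_i of the family P, then DoM(P, Q) = DoM(P, Q \ {q₀}). -/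
/-- Step 1 correctness (dominated by `P`): if `q₀ ∈ Q` is weakly dominated by some point
`P i` of the family `P`, then removing `q₀` from `Q` does not change the dominance move. -/
theorem dom_erase_dominated_by_P {M NP : ℕ} (hM : 0 < M) (hNP : 0 < NP)
    (P : Fin NP → Fin M → ℝ) (Q : Finset (Fin M → ℝ)) (hQ : 2 ≤ Q.card)
    (q₀ : Fin M → ℝ) (hq₀ : q₀ ∈ Q)
    (hdom : ∃ i, WeaklyDominates (P i) q₀) :
    DoM P Q = DoM P (Q.erase q₀) := by
  obtain ⟨i₀, hi₀⟩ := hdom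
  have hQne : Q.Nonempty := ⟨q₀, hq₀⟩
  set SQ := { c : ℝ | ∃ P' : Fin NP → Fin M → ℝ,
    (∀ q ∈ Q, ∃ i, WeaklyDominates (P' i) q) ∧
    c = ∑ i, ∑ m, |P i m - P' i m| } with hSQ
  set SE := { c : ℝ | ∃ P' : Fin NP → Fin M → ℝ,
    (∀ q ∈ Q.erase q₀, ∃ i, WeaklyDominates (P' i) q) ∧
    c = ∑ i, ∑ m, |P i m - P' i m| } with hSE
  have hbddQ : BddBelow SQ := by
    refine ⟨0, ?_⟩
    rintro c ⟨P', -, rfl⟩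
    positivity
  have hbddE : BddBelow SE := by
    refine ⟨0, ?_⟩
    rintro c ⟨P', -, rfl⟩
    positivity
  have hneQ : SQ.Nonempty := by
    refine ⟨_, fun _ => fun m => Q.inf' hQne (fun q => q m), ?_, rfl⟩
    intro q hq
    exact ⟨⟨0, hNP⟩, fun m => Finset.inf'_le _ hq⟩
  have hsub : SQ ⊆ SE := by
    rintro c ⟨P', hP', rfl⟩
    exact ⟨P', fun q hq => hP' q (Finset.mem_of_mem_erase hq), rfl⟩
  show sInf SQ = sInf SE
  refine le_antisymm ?_ (csInf_le_csInf hbddE hneQ hsub)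
  refine le_csInf (hneQ.mono hsub) ?_
  rintro c ⟨P', hP', rfl⟩
  set P'' : Fin NP → Fin M → ℝ :=
    fun i => if i = i₀ then (fun m => min (P' i₀ m) (P i₀ m)) else P' i with hP''
  have hmem : (∑ i, ∑ m, |P i m - P'' i m|) ∈ SQ := by
    refine ⟨P'', ?_, rfl⟩
    intro q hq
    by_cases hqq : q = q₀
    · subst hqq
      refine ⟨i₀, fun m => ?_⟩
      simp only [hP'', if_pos rfl]
      exact le_trans (min_le_right _ _) (hi₀ m)
    · obtain ⟨i, hi⟩ := hP' q (Finset.mem_erase.2 ⟨hqq, hq⟩)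
      refine ⟨i, fun m => ?_⟩
      by_cases hii : i = i₀
      · subst hii
        simp only [hP'', if_pos rfl]
        exact le_trans (min_le_left _ _) (hi m)
      · simpa [hP'', hii] using hi m
  refine csInf_le_of_le hbddQ hmem ?_
  refine Finset.sum_le_sum fun i _ => Finset.sum_le_sum fun m _ => ?_
  by_cases hii : i = i₀
  · subst hii
    simp only [hP'', if_pos rfl]
    rcases le_total (P' i m) (P i m) with h | h
    · rw [min_eq_left h]
    · rw [min_eq_right h]
      simp
  · simp [hP'', hii]
end

section
/- Let M be a positive natural number, let Q be a finite nonempty set of points in ℝ^M, and let P = (p_1, …, p_{NP}) be a family of points in ℝ^M with NP ≥ 2. If some point p_{i₀} of the family is weakly dominated by another point p_j of the family (j ≠ i₀), then DoM of the family with p_{i₀} removed equals DoM(P, Q); that is, removing a dominated point of P does not change the dominance move. -/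
private lemma key_abs {pj pi a b : ℝ} (h : pj ≤ pi) :
    |pj - min a b| ≤ |pj - a| + |pi - b| := by
  rcases le_total a b with hab | hab
  · rw [min_eq_left hab]
    have := abs_nonneg (pi - b); linarith
  · rw [min_eq_right hab]
    rcases le_total pj b with h2 | h2
    · rw [abs_of_nonpos (by linarith : pj - b ≤ 0),
        abs_of_nonpos (by linarith : pj - a ≤ 0)]
      have := abs_nonneg (pi - b); linarith
    · rw [abs_of_nonneg (by linarith : (0:ℝ) ≤ pj - b)]
      have h4 : pi - b ≤ |pi - b| := le_abs_self _
      have := abs_nonneg (pj - a); linarith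

/-- Step 1 correctness (dominated within `P`): if a point `P i₀` of the family `P`
(of size `NP + 1 ≥ 2`) is weakly dominated by another point `P j` (`j ≠ i₀`), then removing
`P i₀` from the family does not change the dominance move. -/
theorem dom_remove_dominated_in_P {M NP : ℕ} (hM : 0 < M) (hNP : 1 ≤ NP)
    (P : Fin (NP + 1) → Fin M → ℝ) (Q : Finset (Fin M → ℝ)) (hQ : Q.Nonempty)
    (i₀ j : Fin (NP + 1)) (hij : j ≠ i₀) (hdom : WeaklyDominates (P j) (P i₀)) :
    DoM (fun i : Fin NP => P (i₀.succAbove i)) Q = DoM P Q := by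
  obtain ⟨j', hj'⟩ := Fin.exists_succAbove_eq hij
  set r : Fin M → ℝ := fun m => Q.inf' hQ (fun q => q m) with hr
  have hrdom : ∀ q ∈ Q, WeaklyDominates r q := fun q hq m => Finset.inf'_le _ hq
  set A := { c : ℝ | ∃ P' : Fin NP → Fin M → ℝ,
    (∀ q ∈ Q, ∃ i, WeaklyDominates (P' i) q) ∧
    c = ∑ i, ∑ m, |P (i₀.succAbove i) m - P' i m| } with hA
  set B := { c : ℝ | ∃ P' : Fin (NP + 1) → Fin M → ℝ,
    (∀ q ∈ Q, ∃ i, WeaklyDominates (P' i) q) ∧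
    c = ∑ i, ∑ m, |P i m - P' i m| } with hB
  have hAne : A.Nonempty := by
    exact ⟨_, fun _ => r, fun q hq => ⟨⟨0, hNP⟩, hrdom q hq⟩, rfl⟩
  have hBne : B.Nonempty := by
    exact ⟨_, fun _ => r, fun q hq => ⟨0, hrdom q hq⟩, rfl⟩
  have hAbdd : BddBelow A := by
    refine ⟨0, fun c hc => ?_⟩
    obtain ⟨P', -, rfl⟩ := hc
    positivity
  have hBbdd : BddBelow B := by
    refine ⟨0, fun c hc => ?_⟩
    obtain ⟨P', -, rfl⟩ := hc
    positivity
  show sInf A = sInf B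
  apply le_antisymm
  · -- sInf A ≤ sInf B
    refine le_csInf hBne ?_
    rintro c ⟨P', hcov, rfl⟩
    set P'' : Fin NP → Fin M → ℝ :=
      fun i => if i = j' then (fun m => min (P' j m) (P' i₀ m)) else P' (i₀.succAbove i)
      with hP''
    have hcov' : ∀ q ∈ Q, ∃ i, WeaklyDominates (P'' i) q := by
      intro q hq
      obtain ⟨i, hi⟩ := hcov q hq
      by_cases h : i = i₀
      · refine ⟨j', fun m => ?_⟩
        simp only [hP'', if_pos rfl]
        exact le_trans (min_le_right _ _) (h ▸ hi m)
      · obtain ⟨i', rfl⟩ := Fin.exists_succAbove_eq h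
        by_cases h2 : i' = j'
        · refine ⟨j', fun m => ?_⟩
          simp only [hP'', if_pos rfl]
          subst h2
          exact le_trans (min_le_left _ _) (by rw [← hj']; exact hi m)
        · exact ⟨i', by simpa [hP'', h2] using hi⟩
    refine le_trans (csInf_le hAbdd ⟨P'', hcov', rfl⟩) ?_
    -- cost comparison
    have hsplit : ∀ f : Fin NP → ℝ,
        ∑ i, f i = f j' + ∑ i ∈ Finset.univ.erase j', f i := by
      intro f
      rw [Finset.add_sum_erase _ f (Finset.mem_univ j')]
    rw [Fin.sum_univ_succAbove (fun i => ∑ m, |P i m - P' i m|) i₀,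
      hsplit (fun i => ∑ m, |P (i₀.succAbove i) m - P'' i m|),
      hsplit (fun i => ∑ m, |P (i₀.succAbove i) m - P' (i₀.succAbove i) m|)]
    have hrest : ∑ i ∈ Finset.univ.erase j', ∑ m, |P (i₀.succAbove i) m - P'' i m|
        = ∑ i ∈ Finset.univ.erase j', ∑ m, |P (i₀.succAbove i) m - P' (i₀.succAbove i) m| := by
      refine Finset.sum_congr rfl fun i hi => ?_
      have : i ≠ j' := (Finset.mem_erase.mp hi).1
      simp [hP'', this]
    rw [hrest]
    have hj'cost : ∑ m, |P (i₀.succAbove j') m - P'' j' m|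
        ≤ ∑ m, |P j m - P' j m| + ∑ m, |P i₀ m - P' i₀ m| := by
      rw [← Finset.sum_add_distrib]
      refine Finset.sum_le_sum fun m _ => ?_
      simp only [hP'', if_pos rfl, hj']
      exact key_abs (hdom m)
    rw [hj'] at hj'cost ⊢
    linarith
  · -- sInf B ≤ sInf A
    refine le_csInf hAne ?_
    rintro c ⟨P'', hcov, rfl⟩
    set Pext : Fin (NP + 1) → Fin M → ℝ :=
      Fin.insertNth (α := fun _ => Fin M → ℝ) i₀ (P i₀) P'' with hPext
    refine csInf_le hBbdd ⟨Pext, ?_, ?_⟩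
    · intro q hq
      obtain ⟨i, hi⟩ := hcov q hq
      exact ⟨i₀.succAbove i, by simpa [hPext, Fin.insertNth_apply_succAbove] using hi⟩
    · rw [Fin.sum_univ_succAbove (fun i => ∑ m, |P i m - Pext i m|) i₀]
      simp [hPext, Fin.insertNth_apply_same, Fin.insertNth_apply_succAbove]
end

section
/- Let M be a positive natural number, let P = (p_1, …, p_{NP}) be a finite nonempty family of points in ℝ^M and Q a finite nonempty set of points in ℝ^M. Then there exists a function φ : Q → {1, …, NP} and a minimizing family P' attaining DoM(P,Q) in which, for every index i with φ⁻¹(i) nonempty, p'_{i,m} = min(p_{i,m}, min_{q ∈ φ⁻¹(i)} q_m) for every coordinate m, and p'_i = p_i for every index i with φ⁻¹(i) empty. -/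
namespace DomAux

variable {M NP : ℕ}

/-- The structured family associated to an assignment `φ`. -/
noncomputable def structP (P : Fin NP → Fin M → ℝ) (Q : Finset (Fin M → ℝ))
    (φ : (Fin M → ℝ) → Fin NP) : Fin NP → Fin M → ℝ :=
  fun i m => if h : (Q.filter (fun q => φ q = i)).Nonempty
    then min (P i m) ((Q.filter (fun q => φ q = i)).inf' h (fun q => q m))
    else P i m

lemma structP_feasible (P : Fin NP → Fin M → ℝ) (Q : Finset (Fin M → ℝ))
    (φ : (Fin M → ℝ) → Fin NP) :
    ∀ q ∈ Q, ∃ i, WeaklyDominates (structP P Q φ i) q := by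
  intro q hq
  refine ⟨φ q, fun m => ?_⟩
  have hq' : q ∈ Q.filter (fun r => φ r = φ q) := Finset.mem_filter.2 ⟨hq, rfl⟩
  have hne : (Q.filter (fun r => φ r = φ q)).Nonempty := ⟨q, hq'⟩
  simp only [structP, dif_pos hne]
  exact le_trans (min_le_right _ _) (Finset.inf'_le _ hq')

lemma structP_cost_le (P : Fin NP → Fin M → ℝ) (Q : Finset (Fin M → ℝ))
    (φ : (Fin M → ℝ) → Fin NP) (P' : Fin NP → Fin M → ℝ)
    (hdom : ∀ q ∈ Q, WeaklyDominates (P' (φ q)) q) :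
    ∑ i, ∑ m, |P i m - structP P Q φ i m| ≤ ∑ i, ∑ m, |P i m - P' i m| := by
  refine Finset.sum_le_sum fun i _ => Finset.sum_le_sum fun m _ => ?_
  by_cases h : (Q.filter (fun q => φ q = i)).Nonempty
  · simp only [structP, dif_pos h]
    set b := (Q.filter (fun q => φ q = i)).inf' h (fun q => q m) with hb
    have h1 : |P i m - min (P i m) b| = P i m - min (P i m) b := by
      rw [abs_of_nonneg]
      exact sub_nonneg.2 (min_le_left _ _)
    rw [h1]
    rcases le_total (P i m) b with hle | hle
    · rw [min_eq_left hle]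
      simpa using abs_nonneg (P i m - P' i m)
    · rw [min_eq_right hle]
      have hPb : P' i m ≤ b := by
        apply Finset.le_inf'
        intro q hq
        obtain ⟨hqQ, hqi⟩ := Finset.mem_filter.1 hq
        have := hdom q hqQ m
        rwa [hqi] at this
      calc P i m - b ≤ P i m - P' i m := by linarith
        _ ≤ |P i m - P' i m| := le_abs_self _
  · simp only [structP, dif_neg h, sub_self, abs_zero]
    exact abs_nonneg _

lemma structP_congr (P : Fin NP → Fin M → ℝ) (Q : Finset (Fin M → ℝ))
    {φ ψ : (Fin M → ℝ) → Fin NP} (h : ∀ q ∈ Q, φ q = ψ q) :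
    structP P Q φ = structP P Q ψ := by
  have hf : ∀ i, Q.filter (fun q => φ q = i) = Q.filter (fun q => ψ q = i) := by
    intro i
    apply Finset.filter_congr
    intro q hq
    rw [h q hq]
  funext i m
  simp only [structP, hf i]

end DomAux

/-- Structure of an optimal solution: there is an assignment `φ` of the points of `Q` to
indices of `P` and a minimizing family `P'` attaining `DoM(P,Q)` in which each moved point
with a nonempty assigned group is the componentwise minimum of its base point and the ideal
point of its group, and every point with an empty group is left unmoved. -/
theorem dom_optimal_structure {M NP : ℕ} (hM : 0 < M) (hNP : 0 < NP)
    (P : Fin NP → Fin M → ℝ) (Q : Finset (Fin M → ℝ)) (hQ : Q.Nonempty) :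
    ∃ (φ : (Fin M → ℝ) → Fin NP) (P' : Fin NP → Fin M → ℝ),
      (∀ q ∈ Q, ∃ i, WeaklyDominates (P' i) q) ∧
      (∑ i, ∑ m, |P i m - P' i m|) = DoM P Q ∧
      (∀ i, ∀ h : (Q.filter (fun q => φ q = i)).Nonempty, ∀ m,
        P' i m = min (P i m) ((Q.filter (fun q => φ q = i)).inf' h (fun q => q m))) ∧
      (∀ i, ¬ (Q.filter (fun q => φ q = i)).Nonempty → P' i = P i) := by
  classical
  set i0 : Fin NP := ⟨0, hNP⟩
  let ext : (↥Q → Fin NP) → ((Fin M → ℝ) → Fin NP) :=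
    fun f q => if h : q ∈ Q then f ⟨q, h⟩ else i0
  let cost : ((Fin M → ℝ) → Fin NP) → ℝ :=
    fun φ => ∑ i, ∑ m, |P i m - DomAux.structP P Q φ i m|
  obtain ⟨f₀, -, hf₀⟩ := Finset.exists_min_image (Finset.univ : Finset (↥Q → Fin NP))
    (fun f => cost (ext f)) ⟨fun _ => i0, Finset.mem_univ _⟩
  set φ₀ : (Fin M → ℝ) → Fin NP := ext f₀ with hφ₀
  have hmin : ∀ φ : (Fin M → ℝ) → Fin NP, cost φ₀ ≤ cost φ := by
    intro φ
    have h1 := hf₀ (fun q => φ q.1) (Finset.mem_univ _)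
    have h2 : DomAux.structP P Q (ext fun q => φ q.1) = DomAux.structP P Q φ := by
      apply DomAux.structP_congr
      intro q hq
      simp [ext, dif_pos hq]
    simpa [cost, h2] using h1
  set S : Set ℝ := { c : ℝ | ∃ P' : Fin NP → Fin M → ℝ,
    (∀ q ∈ Q, ∃ i, WeaklyDominates (P' i) q) ∧
    c = ∑ i, ∑ m, |P i m - P' i m| } with hS
  have hmem : cost φ₀ ∈ S :=
    ⟨DomAux.structP P Q φ₀, DomAux.structP_feasible P Q φ₀, rfl⟩
  have hbdd : BddBelow S := by
    refine ⟨0, ?_⟩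
    rintro c ⟨P', -, rfl⟩
    positivity
  have hle : ∀ c ∈ S, cost φ₀ ≤ c := by
    rintro c ⟨P', hP', rfl⟩
    set ψ : (Fin M → ℝ) → Fin NP :=
      fun q => if h : ∃ i, WeaklyDominates (P' i) q then h.choose else i0
    have hdom : ∀ q ∈ Q, WeaklyDominates (P' (ψ q)) q := by
      intro q hq
      have h := hP' q hq
      simp only [ψ, dif_pos h]
      exact h.choose_spec
    exact le_trans (hmin ψ) (DomAux.structP_cost_le P Q ψ P' hdom)
  have hDoM : (∑ i, ∑ m, |P i m - DomAux.structP P Q φ₀ i m|) = DoM P Q := by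
    have : DoM P Q = sInf S := rfl
    rw [this]
    exact le_antisymm (le_csInf ⟨_, hmem⟩ hle) (csInf_le hbdd hmem)
  refine ⟨φ₀, DomAux.structP P Q φ₀, DomAux.structP_feasible P Q φ₀, hDoM, ?_, ?_⟩
  · intro i h m
    simp only [DomAux.structP, dif_pos h]
  · intro i h
    funext m
    simp only [DomAux.structP, dif_neg h]
end
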